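/- For every natural number n there exists a 2-coloring of the complete 3-uniform hypergraph on the vertex set {r₃(1), r₃(1)+1, ..., n} such that every monochromatic clique S satisfies ∑_{i ∈ S} 1/ρ₃(i) ≤ 4. -/

import Mathlib

/-- A subset `S` of `Fin n` is monochromatic with respect to a coloring `c` of triples
if all triples `i < j < l` from `S` receive the same color. -/
def MonoTripleClique (n : ℕ) (c : Fin n → Fin n → Fin n → Bool) (S : Finset (Fin n)) :
    Prop :=
  ∃ clr : Bool, ∀ i ∈ S, ∀ j ∈ S, ∀ l ∈ S, i < j → j < l → c i j l = clr

/-- `rho3 n` is the minimum, over all 2-colorings of the complete 3-uniform hypergraph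
on `n` vertices, of the maximum size of a monochromatic clique; equivalently, the least
`m` such that some 2-coloring has all monochromatic cliques of size at most `m`. -/
noncomputable def rho3 (n : ℕ) : ℕ :=
  sInf { m | ∃ c : Fin n → Fin n → Fin n → Bool,
    ∀ S : Finset (Fin n), MonoTripleClique n c S → S.card ≤ m }

/-- The 3-uniform hypergraph Ramsey number `r3 t`: the least `n` such that every
2-coloring of the complete 3-uniform hypergraph on `n` vertices contains a
monochromatic clique of size `t`. -/
noncomputable def r3 (t : ℕ) : ℕ :=
  sInf { n | ∀ c : Fin n → Fin n → Fin n → Bool,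
    ∃ S : Finset (Fin n), MonoTripleClique n c S ∧ t ≤ S.card }

/-!
Group the vertices into blocks `k = ⌊log₂ ρ₃(i)⌋`, so that each vertex of block `k` weighs at
most `2⁻ᵏ`. The vertices `≤ n` of block `k` lie in an initial segment `{0, …, m}` with
`ρ₃(m) < 2ᵏ⁺¹`, so an optimal coloring of `{0, …, m - 1}` keeps every monochromatic clique
inside block `k` down to at most `2ᵏ⁺¹` vertices, of total weight at most `2`. A triple meeting
two blocks gets color `true` exactly when its two smallest vertices share a block. Then a
`true`-clique meets every block but its lowest one in at most one vertex, and a `false`-clique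
every block but its highest one; those single vertices lie in distinct blocks and weigh at most
`∑ₖ 2⁻ᵏ = 2` together.
-/

open Finset

def IsMonoClique (c : ℕ → ℕ → ℕ → Bool) (S : Finset ℕ) : Prop :=
  ∃ clr : Bool, ∀ i ∈ S, ∀ j ∈ S, ∀ l ∈ S, i < j → j < l → c i j l = clr

theorem IsMonoClique.subset {c : ℕ → ℕ → ℕ → Bool} {S T : Finset ℕ} (hS : IsMonoClique c S)
    (hTS : T ⊆ S) : IsMonoClique c T := by
  obtain ⟨clr, hclr⟩ := hS
  exact ⟨clr, fun i hi j hj l hl => hclr i (hTS hi) j (hTS hj) l (hTS hl)⟩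

theorem monoTripleClique_singleton {n : ℕ} (c : Fin n → Fin n → Fin n → Bool) (a : Fin n) :
    MonoTripleClique n c {a} :=
  ⟨true, fun i hi j hj _ _ hij _ => by
    rw [mem_singleton] at hi hj
    exact absurd hij (by rw [hi, hj]; exact lt_irrefl a)⟩

theorem exists_coloring_card_le_rho3 (n : ℕ) : ∃ c : Fin n → Fin n → Fin n → Bool,
    ∀ S : Finset (Fin n), MonoTripleClique n c S → #S ≤ rho3 n :=
  Nat.sInf_mem (s := { m | ∃ c : Fin n → Fin n → Fin n → Bool,
    ∀ S : Finset (Fin n), MonoTripleClique n c S → #S ≤ m })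
    ⟨n, fun _ _ _ => true, fun S _ => by simpa using card_le_univ S⟩

theorem rho3_pos {n : ℕ} (hn : 0 < n) : 0 < rho3 n := by
  obtain ⟨c, hc⟩ := exists_coloring_card_le_rho3 n
  exact (by simpa using hc {⟨0, hn⟩} (monoTripleClique_singleton c _) : 1 ≤ rho3 n)

theorem r3_one : r3 1 = 1 := by
  have h1 : 1 ∈ { n | ∀ c : Fin n → Fin n → Fin n → Bool,
      ∃ S : Finset (Fin n), MonoTripleClique n c S ∧ 1 ≤ #S } :=
    fun c => ⟨{0}, monoTripleClique_singleton c 0, by simp⟩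
  have h0 : 0 ∉ { n | ∀ c : Fin n → Fin n → Fin n → Bool,
      ∃ S : Finset (Fin n), MonoTripleClique n c S ∧ 1 ≤ #S } := fun h => by
    obtain ⟨S, -, hS⟩ := h fun _ _ _ => true
    simp [Subsingleton.elim S ∅] at hS
  refine le_antisymm (Nat.sInf_le h1) (Nat.one_le_iff_ne_zero.2 fun hr => ?_)
  rcases Nat.sInf_eq_zero.1 hr with h | h
  · exact h0 h
  · exact (Set.eq_empty_iff_forall_notMem.1 h) 1 h1

theorem exists_coloring_nat_card_le_rho3 (m : ℕ) : ∃ c : ℕ → ℕ → ℕ → Bool,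
    ∀ S : Finset ℕ, (∀ i ∈ S, i < m) → IsMonoClique c S → #S ≤ rho3 m := by
  obtain ⟨c, hc⟩ := exists_coloring_card_le_rho3 m
  refine ⟨fun i j l => if h : i < m ∧ j < m ∧ l < m
      then c ⟨i, h.1⟩ ⟨j, h.2.1⟩ ⟨l, h.2.2⟩ else true, ?_⟩
  rintro S hSm ⟨clr, hclr⟩
  rw [← card_attachFin S hSm]
  refine hc _ ⟨clr, fun a ha b hb l hl hab hbl => ?_⟩
  rw [mem_attachFin] at ha hb hl
  simpa [a.isLt, b.isLt, l.isLt] using hclr a ha b hb l hl hab hbl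

/-- One extra vertex `m` on top of an optimal coloring of `{0, …, m - 1}` costs at most one more
clique vertex; `m` is the last vertex `≤ n` with `ρ₃(m) < N`. -/
theorem exists_coloring_card_le_of_forall_rho3_lt (n N : ℕ) : ∃ c : ℕ → ℕ → ℕ → Bool,
    ∀ S ⊆ Iic n, IsMonoClique c S → (∀ i ∈ S, rho3 i < N) → #S ≤ N := by
  classical
  set m := Nat.findGreatest (fun i => rho3 i < N) n
  obtain ⟨c, hc⟩ := exists_coloring_nat_card_le_rho3 m
  refine ⟨c, fun S hSn hS hN => ?_⟩
  obtain rfl | ⟨i, hi⟩ := S.eq_empty_or_nonempty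
  · simp
  have hm : rho3 m < N :=
    Nat.findGreatest_spec (P := fun i => rho3 i < N) (mem_Iic.1 (hSn hi)) (hN i hi)
  have herase : #(S.erase m) ≤ rho3 m := by
    refine hc _ (fun j hj => ?_) (hS.subset (erase_subset m S))
    obtain ⟨hjm, hjS⟩ := mem_erase.1 hj
    exact lt_of_le_of_ne (Nat.le_findGreatest (mem_Iic.1 (hSn hjS)) (hN j hjS)) hjm
  have := pred_card_le_card_erase (s := S) (a := m)
  omega

section BlockColoring

variable (b : ℕ → ℕ) (g : ℕ → ℕ → ℕ → ℕ → Bool)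

def blockColoring : ℕ → ℕ → ℕ → Bool := fun i j l =>
  if b i = b j ∧ b j = b l then g (b i) i j l else decide (b i = b j)

variable {b g} {S : Finset ℕ}

theorem IsMonoClique.filter_blockColoring (hS : IsMonoClique (blockColoring b g) S) (k : ℕ) :
    IsMonoClique (g k) (S.filter (b · = k)) := by
  obtain ⟨clr, hclr⟩ := hS
  refine ⟨clr, fun i hi j hj l hl hij hjl => ?_⟩
  rw [mem_filter] at hi hj hl
  have := hclr i hi.1 j hj.1 l hl.1 hij hjl
  rwa [blockColoring, if_pos ⟨hi.2.trans hj.2.symm, hj.2.trans hl.2.symm⟩, hi.2] at this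

theorem IsMonoClique.exists_forall_ne_card_filter_le_one
    (hS : IsMonoClique (blockColoring b g) S) :
    ∃ K, ∀ k ≠ K, #(S.filter (b · = k)) ≤ 1 := by
  obtain rfl | hne := S.eq_empty_or_nonempty
  · exact ⟨0, fun k _ => by simp⟩
  obtain ⟨clr, hclr⟩ := hS
  suffices ∃ K, ∀ k ≠ K, ∀ i ∈ S.filter (b · = k), ∀ j ∈ S.filter (b · = k), ¬ i < j by
    obtain ⟨K, hK⟩ := this
    exact ⟨K, fun k hk => card_le_one.2 fun i hi j hj =>
      le_antisymm (not_lt.1 (hK k hk j hj i hi)) (not_lt.1 (hK k hk i hi j hj))⟩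
  cases clr
  · refine ⟨b (S.max' hne), fun k hk i hi j hj hij => ?_⟩
    rw [mem_filter] at hi hj
    have hjx : j < S.max' hne :=
      lt_of_le_of_ne (S.le_max' j hj.1) fun h => hk (h ▸ hj.2).symm
    have := hclr i hi.1 j hj.1 _ (S.max'_mem hne) hij hjx
    rw [blockColoring, if_neg fun h => hk (hj.2.symm.trans h.2)] at this
    exact of_decide_eq_false this (hi.2.trans hj.2.symm)
  · refine ⟨b (S.min' hne), fun k hk i hi j hj hij => ?_⟩
    rw [mem_filter] at hi hj
    have hxi : S.min' hne < i :=
      lt_of_le_of_ne (S.min'_le i hi.1) fun h => hk (h ▸ hi.2).symm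
    have := hclr _ (S.min'_mem hne) i hi.1 j hj.1 hxi hij
    rw [blockColoring, if_neg fun h => hk (h.1.trans hi.2).symm] at this
    exact hk ((of_decide_eq_true this).trans hi.2).symm

end BlockColoring

theorem one_div_le_half_pow_log {m : ℕ} (hm : m ≠ 0) :
    (1 : ℝ) / m ≤ (1 / 2) ^ Nat.log 2 m := by
  rw [one_div_pow]
  gcongr
  exact_mod_cast Nat.pow_log_le_self 2 hm

theorem sum_le_two_of_injOn {S : Finset ℕ} {b : ℕ → ℕ} {w : ℕ → ℝ}
    (hw : ∀ i ∈ S, w i ≤ (1 / 2) ^ b i) (hb : Set.InjOn b S) : ∑ i ∈ S, w i ≤ 2 := by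
  classical
  calc ∑ i ∈ S, w i ≤ ∑ i ∈ S, ((1 : ℝ) / 2) ^ b i := sum_le_sum hw
    _ = ∑ k ∈ S.image b, ((1 : ℝ) / 2) ^ k := (sum_image hb).symm
    _ ≤ ∑' k, ((1 : ℝ) / 2) ^ k :=
      summable_geometric_two.sum_le_tsum _ fun _ _ => by positivity
    _ = 2 := tsum_geometric_two

theorem sum_le_two_of_card_le {S : Finset ℕ} {k : ℕ} {w : ℕ → ℝ}
    (hw : ∀ i ∈ S, w i ≤ (1 / 2) ^ k) (hS : #S ≤ 2 ^ (k + 1)) : ∑ i ∈ S, w i ≤ 2 :=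
  calc ∑ i ∈ S, w i ≤ #S • ((1 : ℝ) / 2) ^ k := sum_le_card_nsmul _ _ _ hw
    _ ≤ (2 : ℝ) ^ (k + 1) * (1 / 2) ^ k := by
      rw [nsmul_eq_mul]
      gcongr
      exact_mod_cast hS
    _ = 2 := by rw [pow_succ, mul_comm, ← mul_assoc, ← mul_pow]; norm_num

theorem sum_le_four_of_blocks {S : Finset ℕ} (b : ℕ → ℕ) {w : ℕ → ℝ}
    (hw : ∀ i ∈ S, w i ≤ (1 / 2) ^ b i) (hcard : ∀ k, #(S.filter (b · = k)) ≤ 2 ^ (k + 1))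
    (K : ℕ) (hK : ∀ k ≠ K, #(S.filter (b · = k)) ≤ 1) : ∑ i ∈ S, w i ≤ 4 := by
  rw [← sum_filter_add_sum_filter_not S (b · = K)]
  have hblock : ∑ i ∈ S with b i = K, w i ≤ 2 :=
    sum_le_two_of_card_le (fun i hi => (mem_filter.1 hi).2 ▸ hw i (mem_filter.1 hi).1) (hcard K)
  have hrest : ∑ i ∈ S with ¬b i = K, w i ≤ 2 := by
    refine sum_le_two_of_injOn (fun i hi => hw i (mem_filter.1 hi).1) fun i hi j hj hij => ?_
    obtain ⟨hiS, hiK⟩ := mem_filter.1 (mem_coe.1 hi)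
    obtain ⟨hjS, -⟩ := mem_filter.1 (mem_coe.1 hj)
    exact card_le_one.1 (hK (b i) hiK) i (mem_filter.2 ⟨hiS, rfl⟩) j
      (mem_filter.2 ⟨hjS, hij.symm⟩)
  linarith

/-- Section 6.3. For every `n` there is a 2-coloring of the complete
3-uniform hypergraph on `{r₃(1), ..., n}` such that every monochromatic clique `S`
satisfies `∑_{i ∈ S} 1 / ρ₃(i) ≤ 4`. -/
theorem hypergraph_weighted_counterexample (n : ℕ) :
    ∃ c : ℕ → ℕ → ℕ → Bool,
      ∀ S : Finset ℕ, S ⊆ Finset.Icc (r3 1) n →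
        (∃ clr : Bool, ∀ i ∈ S, ∀ j ∈ S, ∀ l ∈ S, i < j → j < l → c i j l = clr) →
        ∑ i ∈ S, (1 : ℝ) / (rho3 i : ℝ) ≤ 4 := by
  set b : ℕ → ℕ := fun i => Nat.log 2 (rho3 i)
  choose g hg using fun k => exists_coloring_card_le_of_forall_rho3_lt n (2 ^ (k + 1))
  refine ⟨blockColoring b g, fun S hSn (hS : IsMonoClique (blockColoring b g) S) => ?_⟩
  rw [r3_one] at hSn
  obtain ⟨K, hK⟩ := hS.exists_forall_ne_card_filter_le_one
  refine sum_le_four_of_blocks b (fun i hi => ?_) (fun k => ?_) K hK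
  · exact one_div_le_half_pow_log (rho3_pos (mem_Icc.1 (hSn hi)).1).ne'
  · refine hg k _ (fun i hi => ?_) (hS.filter_blockColoring k) fun i hi => ?_
    · exact mem_Iic.2 (mem_Icc.1 (hSn (mem_filter.1 hi).1)).2
    · exact (mem_filter.1 hi).2 ▸ Nat.lt_pow_succ_log_self one_lt_two _
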